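/- arXiv:2401.10676 — 2 statements merged into one kernel-verified Lean document; each statement's English description precedes it below -/
import Mathlib

section
/- Let ε > 0 and let N ≥ 1 be an integer. Let x : [0,∞) → ℝ^{N+1} be continuous with x_i(0) ≤ x_{i+1}(0) for all i = 0,…,N−1 (particles may initially overlap), such that x is differentiable on (0,∞), x_0(t) < x_1(t) < ⋯ < x_N(t) for all t > 0, and x satisfies for every t > 0 and every i = 0,…,N the ODE ẋ_i(t) = (1/N)·Σ_{k=0}^{N−1} (W_ε(x_{k+1}(t)−x_i(t)) − W_ε(x_k(t)−x_i(t)))/(x_{k+1}(t)−x_k(t)). Then for every t > 0 one has d_i(t) ≥ (2ε/N)·(1 − e^{−t/(2ε³)}) for all i, and consequently for every p ∈ [1,∞], ‖ρ^N(·,t)‖_{L^p(ℝ)} ≤ (2ε)^{−(p−1)/p}·(1 − e^{−t/(2ε³)})^{−(p−1)/p} (with the convention (p−1)/p = 1 for p = ∞). -/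
/-!
For `t > 0` the gap `d = x_{i+1} - x_i` satisfies `d' ≥ 1/(Nε²) - d/(2ε³)`. Indeed `N d'` is the
sum over the cells `[x_k, x_{k+1}]` of the slopes of `g(w) = W_ε(w - x_{i+1}) - W_ε(w - x_i)`.
On a cell `k ≠ i` the function `g` is smooth with `g' ≥ -d/(2ε³)`, because `W_ε'` is
`1/(2ε³)`-Lipschitz on each half-line; on the cell `k = i` the slope is
`(1 - e^{-d/ε})/(ε d) ≥ 1/ε² - d/(2ε³)`. Comparing with the linear ODE, starting from
`d(0) ≥ 0`, gives `d(t) ≥ (2ε/N)(1 - e^{-t/(2ε³)})`. Hence `ρ^N ≤ 1/(2ε(1 - e^{-t/(2ε³)}))`,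
and as `∫ ρ^N ≤ 1`, `‖ρ^N‖_p^p ≤ ‖ρ^N‖_∞^{p-1}`.
-/

open MeasureTheory Real Set
open scoped ENNReal

/-- Scaled Morse potential `W_ε(x) = (1/(2ε)) e^{-|x|/ε}`. -/
noncomputable def Morse (ε x : ℝ) : ℝ := (1 / (2 * ε)) * Real.exp (-|x| / ε)

/-- Derivative of the scaled Morse potential,
`W_ε'(x) = -(1/(2ε²)) sign(x) e^{-|x|/ε}`. -/
noncomputable def Morse' (ε x : ℝ) : ℝ :=
  -(1 / (2 * ε ^ 2)) * Real.sign x * Real.exp (-|x| / ε)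

/-- Right-hand side of the particle ODE system:
`(1/N) ∑_{k=0}^{N-1} (W_ε(x_{k+1}-x_i) - W_ε(x_k-x_i))/(x_{k+1}-x_k)`. -/
noncomputable def particleRHS (ε : ℝ) (N : ℕ) (x : ℕ → ℝ) (i : ℕ) : ℝ :=
  (1 / (N : ℝ)) * ∑ k ∈ Finset.range N,
    (Morse ε (x (k + 1) - x i) - Morse ε (x k - x i)) / (x (k + 1) - x k)

/-- A strictly ordered particle solution on `[0,∞)`:  a differentiable curve
`x = (x_0,…,x_N)` with `x_0(t) < ⋯ < x_N(t)` for all `t ≥ 0`, solving the particle ODE. -/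
def IsParticleSol (ε : ℝ) (N : ℕ) (x : ℝ → ℕ → ℝ) : Prop :=
  (∀ t : ℝ, 0 ≤ t → ∀ i < N, x t i < x t (i + 1)) ∧
  (∀ i ≤ N, ∀ t : ℝ, 0 ≤ t →
    HasDerivWithinAt (fun s => x s i) (particleRHS ε N (x t) i) (Set.Ici 0) t)

/-- The discrete (piecewise constant) density
`ρ^N(y,t) = ∑_{k=0}^{N-1} R_k(t) 1_{[x_k(t), x_{k+1}(t))}(y)` with `R_k = 1/(N d_k)`. -/
noncomputable def discDens (N : ℕ) (x : ℝ → ℕ → ℝ) (y t : ℝ) : ℝ :=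
  ∑ k ∈ Finset.range N,
    Set.indicator (Set.Ico (x t k) (x t (k + 1)))
      (fun _ => 1 / ((N : ℝ) * (x t (k + 1) - x t k))) y

/-- Convolution in the space variable: `(W ∗ ρ)(x) = ∫ W(x-y) ρ(y) dy`. -/
noncomputable def conv (W ρ : ℝ → ℝ) (x : ℝ) : ℝ := ∫ y, W (x - y) * ρ y

theorem exp_sub_exp_le_of_le_of_nonpos {a b : ℝ} (hab : a ≤ b) (hb : b ≤ 0) :
    exp b - exp a ≤ b - a := by
  have h₁ : exp b * exp (a - b) = exp a := by rw [← exp_add]; ring_nf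
  have h₂ := add_one_le_exp (a - b)
  have h₃ : exp b ≤ 1 := exp_le_one_iff.mpr hb
  nlinarith [exp_pos b]

theorem sub_sq_div_two_le_one_sub_exp_neg {u : ℝ} (hu : 0 ≤ u) :
    u - u ^ 2 / 2 ≤ 1 - exp (-u) := by
  -- `(1 - u + u²/2)(1 + u + u²/2) = 1 + u⁴/4 ≥ 1` and `1 + u + u²/2 ≤ eᵘ`
  have h₁ := quadratic_le_exp_of_nonneg hu
  have h₂ : exp (-u) * exp u = 1 := by rw [← exp_add, neg_add_cancel, exp_zero]
  nlinarith [exp_pos (-u), sq_nonneg (u ^ 2)]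

theorem continuous_morse (ε : ℝ) : Continuous (Morse ε) :=
  continuous_const.mul ((continuous_abs.neg.div_const ε).rexp)

theorem morse'_of_neg (ε : ℝ) {z : ℝ} (hz : z < 0) :
    Morse' ε z = 1 / (2 * ε ^ 2) * exp (z / ε) := by
  simp only [Morse', sign_of_neg hz, abs_of_neg hz, neg_neg]
  ring

theorem morse'_of_pos (ε : ℝ) {z : ℝ} (hz : 0 < z) :
    Morse' ε z = -(1 / (2 * ε ^ 2)) * exp (-z / ε) := by
  simp only [Morse', sign_of_pos hz, abs_of_pos hz, mul_one]

theorem hasDerivAt_morse (ε : ℝ) {z : ℝ} (hz : z ≠ 0) :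
    HasDerivAt (Morse ε) (Morse' ε z) z := by
  have h : HasDerivAt (fun w => 1 / (2 * ε) * exp (-|w| / ε))
      (1 / (2 * ε) * (exp (-|z| / ε) * (-(SignType.sign z : ℝ) / ε))) z :=
    (((hasDerivAt_abs hz).neg.div_const ε).exp).const_mul _
  refine h.congr_deriv ?_
  rcases hz.lt_or_gt with hz | hz
  · simp [morse'_of_neg ε hz, hz, abs_of_neg hz]
    ring
  · simp [morse'_of_pos ε hz, hz, abs_of_pos hz]
    ring

theorem morse'_sub_morse'_ge {ε A B c : ℝ} (hε : 0 < ε) (hAB : A ≤ B) (hc : c < A ∨ B < c) :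
    -((B - A) / (2 * ε ^ 3)) ≤ Morse' ε (c - B) - Morse' ε (c - A) := by
  have hscale : (B - A) / (2 * ε ^ 3) = 1 / (2 * ε ^ 2) * ((B - A) / ε) := by
    field_simp
  have hk : 0 ≤ 1 / (2 * ε ^ 2) := by positivity
  rw [hscale]
  rcases hc with hc | hc
  · rw [morse'_of_neg ε (by linarith), morse'_of_neg ε (by linarith)]
    have h := exp_sub_exp_le_of_le_of_nonpos (a := (c - B) / ε) (b := (c - A) / ε)
      (by gcongr) (div_nonpos_of_nonpos_of_nonneg (by linarith) hε.le)
    have : (c - A) / ε - (c - B) / ε = (B - A) / ε := by ring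
    nlinarith
  · rw [morse'_of_pos ε (by linarith), morse'_of_pos ε (by linarith)]
    have h := exp_sub_exp_le_of_le_of_nonpos (a := -(c - A) / ε) (b := -(c - B) / ε)
      (by gcongr) (div_nonpos_of_nonpos_of_nonneg (by linarith) hε.le)
    have : -(c - B) / ε - -(c - A) / ε = (B - A) / ε := by ring
    nlinarith

theorem morse_sub_morse_slope_ge_of_separated {ε A B p q : ℝ} (hε : 0 < ε) (hAB : A ≤ B)
    (hpq : p ≤ q) (hsep : q ≤ A ∨ B ≤ p) :
    -((B - A) / (2 * ε ^ 3)) * (q - p) ≤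
      (Morse ε (q - B) - Morse ε (q - A)) - (Morse ε (p - B) - Morse ε (p - A)) := by
  set g : ℝ → ℝ := fun w => Morse ε (w - B) - Morse ε (w - A)
  have hout : ∀ z ∈ Ioo p q, z < A ∨ B < z := fun z hz =>
    hsep.imp (fun h => hz.2.trans_le h) (fun h => h.trans_lt hz.1)
  have hderiv : ∀ z ∈ Ioo p q, HasDerivAt g (Morse' ε (z - B) - Morse' ε (z - A)) z := by
    intro z hz
    have hne : z - B ≠ 0 ∧ z - A ≠ 0 := by
      rcases hout z hz with h | h <;> constructor <;> linarith
    exact (hasDerivAt_morse ε hne.1).comp_sub_const z B |>.sub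
      ((hasDerivAt_morse ε hne.2).comp_sub_const z A)
  have hcont : ContinuousOn g (Icc p q) :=
    (((continuous_morse ε).comp (continuous_sub_right B)).sub
      ((continuous_morse ε).comp (continuous_sub_right A))).continuousOn
  refine (convex_Icc p q).mul_sub_le_image_sub_of_le_deriv hcont ?_ ?_ p ⟨le_rfl, hpq⟩ q
    ⟨hpq, le_rfl⟩ hpq
  · rw [interior_Icc]
    exact fun z hz => (hderiv z hz).differentiableAt.differentiableWithinAt
  · rw [interior_Icc]
    intro z hz
    rw [(hderiv z hz).deriv]
    exact morse'_sub_morse'_ge hε hAB (hout z hz)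

theorem morse_sub_morse_slope_ge_on_gap {ε A B : ℝ} (hε : 0 < ε) (hAB : A ≤ B) :
    (1 / ε ^ 2 - (B - A) / (2 * ε ^ 3)) * (B - A) ≤
      (Morse ε (B - B) - Morse ε (B - A)) - (Morse ε (A - B) - Morse ε (A - A)) := by
  set u := (B - A) / ε
  have hu : 0 ≤ u := div_nonneg (by linarith) hε.le
  have hlhs : (1 / ε ^ 2 - (B - A) / (2 * ε ^ 3)) * (B - A) = 1 / ε * (u - u ^ 2 / 2) := by
    simp only [u]; field_simp
  have hrhs : (Morse ε (B - B) - Morse ε (B - A)) - (Morse ε (A - B) - Morse ε (A - A))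
      = 1 / ε * (1 - exp (-u)) := by
    simp only [Morse, sub_self, abs_zero, abs_sub_comm A B, abs_of_nonneg (sub_nonneg.mpr hAB),
      neg_zero, zero_div, exp_zero, u, neg_div]
    field_simp
    ring
  rw [hlhs, hrhs]
  exact mul_le_mul_of_nonneg_left (sub_sq_div_two_le_one_sub_exp_neg hu) (by positivity)

theorem particleRHS_succ_sub_ge {ε : ℝ} (hε : 0 < ε) {N : ℕ} {y : ℕ → ℝ}
    (hy : ∀ k < N, y k < y (k + 1)) {i : ℕ} (hi : i < N) :
    1 / (N * ε ^ 2) - (y (i + 1) - y i) / (2 * ε ^ 3) ≤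
      particleRHS ε N y (i + 1) - particleRHS ε N y i := by
  have hmono : MonotoneOn y (Iic N) := (strictMonoOn_Iic_of_lt_succ hy).monotoneOn
  set d := y (i + 1) - y i
  set m : ℕ → ℝ := fun k => -(d / (2 * ε ^ 3)) + if k = i then 1 / ε ^ 2 else 0
  have hterm : ∀ k ∈ Finset.range N, m k ≤
      (Morse ε (y (k + 1) - y (i + 1)) - Morse ε (y k - y (i + 1))) / (y (k + 1) - y k)
        - (Morse ε (y (k + 1) - y i) - Morse ε (y k - y i)) / (y (k + 1) - y k) := by
    intro k hk
    have hk := Finset.mem_range.mp hk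
    rw [div_sub_div_same, le_div_iff₀ (sub_pos.mpr (hy k hk))]
    have hrearr : Morse ε (y (k + 1) - y (i + 1)) - Morse ε (y k - y (i + 1))
        - (Morse ε (y (k + 1) - y i) - Morse ε (y k - y i))
        = (Morse ε (y (k + 1) - y (i + 1)) - Morse ε (y (k + 1) - y i))
          - (Morse ε (y k - y (i + 1)) - Morse ε (y k - y i)) := by ring
    rw [hrearr]
    by_cases hki : k = i
    · subst hki
      simpa [m, d, sub_eq_add_neg, add_comm] using
        morse_sub_morse_slope_ge_on_gap hε (hy k hk).le
    · have hsep : y (k + 1) ≤ y i ∨ y (i + 1) ≤ y k := by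
        rcases Nat.lt_or_gt_of_ne hki with h | h
        · exact Or.inl (hmono (mem_Iic.mpr (by omega)) (mem_Iic.mpr hi.le) h)
        · exact Or.inr (hmono (mem_Iic.mpr (by omega)) (mem_Iic.mpr hk.le) h)
      simpa [m, hki] using
        morse_sub_morse_slope_ge_of_separated hε (hy i hi).le (hy k hk).le hsep
  have hsum : ∑ k ∈ Finset.range N, m k = N * -(d / (2 * ε ^ 3)) + 1 / ε ^ 2 := by
    simp [m, Finset.sum_add_distrib, Finset.sum_ite_eq', hi]
  calc 1 / (N * ε ^ 2) - d / (2 * ε ^ 3)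
      = 1 / N * ∑ k ∈ Finset.range N, m k := by
        have : (N : ℝ) ≠ 0 := by exact_mod_cast (Nat.zero_lt_of_lt hi).ne'
        rw [hsum]; field_simp; ring
    _ ≤ _ := by
        rw [particleRHS, particleRHS, ← mul_sub, ← Finset.sum_sub_distrib]
        exact mul_le_mul_of_nonneg_left (Finset.sum_le_sum hterm) (by positivity)

theorem mul_exp_add_le_of_hasDerivAt_ge {f f' : ℝ → ℝ} {a c t : ℝ} (hc : 0 < c)
    (hf : ContinuousOn f (Ici 0)) (hderiv : ∀ s, 0 < s → HasDerivAt f (f' s) s)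
    (hge : ∀ s, 0 < s → a - f s / c ≤ f' s) (ht : 0 ≤ t) :
    f 0 * exp (-t / c) + a * c * (1 - exp (-t / c)) ≤ f t := by
  -- integrating factor
  set φ : ℝ → ℝ := fun s => (f s - a * c) * exp (s / c)
  have hφ' : ∀ s, 0 < s →
      HasDerivAt φ (f' s * exp (s / c) + (f s - a * c) * (exp (s / c) * (1 / c))) s := fun s hs =>
    ((hderiv s hs).sub_const _).mul (((hasDerivAt_id s).div_const c).exp.congr_deriv (by simp))
  have hφ'_nonneg : ∀ s, 0 < s →
      0 ≤ f' s * exp (s / c) + (f s - a * c) * (exp (s / c) * (1 / c)) := by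
    intro s hs
    have h : 0 ≤ f' s + (f s - a * c) * (1 / c) := by
      have := hge s hs
      field_simp at this ⊢
      linarith
    nlinarith [exp_pos (s / c)]
  have hφ_mono : MonotoneOn φ (Ici 0) := by
    refine monotoneOn_of_deriv_nonneg (convex_Ici 0)
      ((hf.sub continuousOn_const).mul (continuous_id.div_const c).rexp.continuousOn) ?_ ?_
    · rw [interior_Ici]
      exact fun s hs => (hφ' s hs).differentiableAt.differentiableWithinAt
    · rw [interior_Ici]
      intro s hs
      rw [(hφ' s hs).deriv]
      exact hφ'_nonneg s hs
  have h := hφ_mono self_mem_Ici (mem_Ici.mpr ht) ht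
  have hexp : exp (t / c) * exp (-t / c) = 1 := by rw [← exp_add]; ring_nf; exact exp_zero
  simp only [φ, zero_div, exp_zero, mul_one] at h
  have h' := mul_le_mul_of_nonneg_right h (exp_pos (-t / c)).le
  rw [mul_assoc, hexp, mul_one] at h'
  linarith

theorem particle_gap_ge {ε : ℝ} (hε : 0 < ε) {N : ℕ} {x : ℝ → ℕ → ℝ}
    (hcont : ∀ i ≤ N, ContinuousOn (fun t => x t i) (Ici 0))
    (hinit : ∀ i < N, x 0 i ≤ x 0 (i + 1))
    (hord : ∀ t : ℝ, 0 < t → ∀ i < N, x t i < x t (i + 1))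
    (hode : ∀ i ≤ N, ∀ t : ℝ, 0 < t → HasDerivAt (fun s => x s i) (particleRHS ε N (x t) i) t)
    {t : ℝ} (ht : 0 ≤ t) {i : ℕ} (hi : i < N) :
    2 * ε / N * (1 - exp (-t / (2 * ε ^ 3))) ≤ x t (i + 1) - x t i := by
  have hN : (N : ℝ) ≠ 0 := by exact_mod_cast (Nat.zero_lt_of_lt hi).ne'
  have h := mul_exp_add_le_of_hasDerivAt_ge (f := fun s => x s (i + 1) - x s i)
    (a := 1 / (N * ε ^ 2)) (by positivity) ((hcont _ hi).sub (hcont _ hi.le))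
    (fun s hs => (hode _ hi s hs).sub (hode _ hi.le s hs))
    (fun s hs => particleRHS_succ_sub_ge hε (hord s hs) hi) ht
  have hac : 1 / (N * ε ^ 2) * (2 * ε ^ 3) = 2 * ε / N := by field_simp
  rw [hac] at h
  nlinarith [exp_pos (-t / (2 * ε ^ 3)), sub_nonneg.mpr (hinit i hi)]

theorem discDens_nonneg {N : ℕ} {x : ℝ → ℕ → ℝ} {t : ℝ} (hle : ∀ k < N, x t k ≤ x t (k + 1))
    (y : ℝ) : 0 ≤ discDens N x y t :=
  Finset.sum_nonneg fun k hk => indicator_nonneg (fun _ _ => by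
    have := hle k (Finset.mem_range.mp hk)
    exact one_div_nonneg.mpr (mul_nonneg (Nat.cast_nonneg N) (by linarith))) y

theorem discDens_le_of_div_le_gap {N : ℕ} {x : ℝ → ℕ → ℝ} {t δ : ℝ} (hδ : 0 < δ)
    (hgap : ∀ k < N, δ / N ≤ x t (k + 1) - x t k) (y : ℝ) : discDens N x y t ≤ δ⁻¹ := by
  have hmul : ∀ k < N, δ ≤ N * (x t (k + 1) - x t k) := fun k hk => by
    have hN : (0 : ℝ) < N := by exact_mod_cast Nat.zero_lt_of_lt hk
    simpa [mul_div_cancel₀ δ hN.ne'] using mul_le_mul_of_nonneg_left (hgap k hk) hN.le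
  have hlt : ∀ k < N, x t k < x t (k + 1) := fun k hk =>
    sub_pos.mp (pos_of_mul_pos_right (hδ.trans_le (hmul k hk)) (Nat.cast_nonneg N))
  have hmono : MonotoneOn (x t) (Iic N) := (strictMonoOn_Iic_of_lt_succ hlt).monotoneOn
  by_cases hy : ∃ j < N, y ∈ Ico (x t j) (x t (j + 1))
  · obtain ⟨j, hj, hyj⟩ := hy
    rw [discDens, Finset.sum_eq_single_of_mem j (Finset.mem_range.mpr hj), indicator_of_mem hyj,
      one_div]
    · exact inv_anti₀ hδ (hmul j hj)
    · intro k hk hkj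
      refine indicator_of_notMem (fun hyk => ?_) _
      have hk := Finset.mem_range.mp hk
      rcases Nat.lt_or_gt_of_ne hkj with h | h
      · have := hmono (mem_Iic.mpr hk) (mem_Iic.mpr hj.le) h
        linarith [hyk.2, hyj.1]
      · have := hmono (mem_Iic.mpr hj) (mem_Iic.mpr hk.le) h
        linarith [hyk.1, hyj.2]
  · simp only [not_exists, not_and] at hy
    rw [discDens, Finset.sum_eq_zero fun k hk => indicator_of_notMem (hy k
      (Finset.mem_range.mp hk)) _]
    positivity

theorem lintegral_discDens_le_one {N : ℕ} {x : ℝ → ℕ → ℝ} {t : ℝ}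
    (hle : ∀ k < N, x t k ≤ x t (k + 1)) :
    ∫⁻ y, ENNReal.ofReal (discDens N x y t) ≤ 1 := by
  set c : ℕ → ℝ := fun k => 1 / ((N : ℝ) * (x t (k + 1) - x t k))
  have hc : ∀ k ∈ Finset.range N, 0 ≤ c k := fun k hk =>
    one_div_nonneg.mpr (mul_nonneg (Nat.cast_nonneg N)
      (sub_nonneg.mpr (hle k (Finset.mem_range.mp hk))))
  have hpiece : ∀ k ∈ Finset.range N,
      ENNReal.ofReal (c k) * volume (Ico (x t k) (x t (k + 1))) ≤ ENNReal.ofReal (1 / N) := by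
    intro k hk
    rw [Real.volume_Ico, ← ENNReal.ofReal_mul (hc k hk)]
    refine ENNReal.ofReal_le_ofReal ?_
    rcases (sub_nonneg.mpr (hle k (Finset.mem_range.mp hk))).eq_or_lt with h | h
    · simp [← h]
    · rw [one_div_mul_eq_div, div_mul_cancel_right₀ h.ne', one_div]
  calc ∫⁻ y, ENNReal.ofReal (discDens N x y t)
      = ∫⁻ y, ∑ k ∈ Finset.range N,
          (Ico (x t k) (x t (k + 1))).indicator (fun _ => ENNReal.ofReal (c k)) y := by
        refine lintegral_congr fun y => ?_
        rw [discDens, ENNReal.ofReal_sum_of_nonneg fun k hk => indicator_nonneg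
          (fun _ _ => hc k hk) y]
        refine Finset.sum_congr rfl fun k _ => ?_
        by_cases hy : y ∈ Ico (x t k) (x t (k + 1)) <;> simp [hy, c]
    _ = ∑ k ∈ Finset.range N, ENNReal.ofReal (c k) * volume (Ico (x t k) (x t (k + 1))) := by
        rw [lintegral_finsetSum _ fun k _ => measurable_const.indicator measurableSet_Ico]
        simp only [lintegral_indicator_const measurableSet_Ico]
    _ ≤ ∑ k ∈ Finset.range N, ENNReal.ofReal (1 / N) := Finset.sum_le_sum hpiece
    _ ≤ 1 := by
        rw [Finset.sum_const, Finset.card_range, nsmul_eq_mul, ← ENNReal.ofReal_natCast,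
          ← ENNReal.ofReal_mul (Nat.cast_nonneg N), ← ENNReal.ofReal_one]
        refine ENNReal.ofReal_le_ofReal ?_
        rcases eq_or_ne (N : ℝ) 0 with h | h <;> simp [h]

theorem eLpNorm_le_rpow_of_le_of_lintegral_le_one {α : Type*} [MeasurableSpace α]
    {μ : Measure α} {g : α → ℝ} {M p : ℝ} (hM : 0 ≤ M) (hg : ∀ y, 0 ≤ g y) (hgM : ∀ y, g y ≤ M)
    (hint : ∫⁻ y, ENNReal.ofReal (g y) ∂μ ≤ 1) (hp : 1 ≤ p) :
    eLpNorm g (ENNReal.ofReal p) μ ≤ ENNReal.ofReal (M ^ ((p - 1) / p)) := by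
  have hp0 : 0 < p := by linarith
  have hMp : ENNReal.ofReal M ^ (p - 1) ≠ ⊤ :=
    ENNReal.rpow_ne_top_of_nonneg (by linarith) ENNReal.ofReal_ne_top
  have hpow : ∀ y, ENNReal.ofReal (g y) ^ p ≤ ENNReal.ofReal M ^ (p - 1) * ENNReal.ofReal (g y) := by
    intro y
    calc ENNReal.ofReal (g y) ^ p = ENNReal.ofReal (g y) ^ (p - 1) * ENNReal.ofReal (g y) := by
          conv_lhs => rw [← sub_add_cancel p 1]
          rw [ENNReal.rpow_add_of_nonneg _ _ (by linarith) zero_le_one, ENNReal.rpow_one]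
      _ ≤ _ := by gcongr; exact hgM y
  have hint_p : ∫⁻ y, ENNReal.ofReal (g y) ^ p ∂μ ≤ ENNReal.ofReal M ^ (p - 1) :=
    calc ∫⁻ y, ENNReal.ofReal (g y) ^ p ∂μ
        ≤ ∫⁻ y, ENNReal.ofReal M ^ (p - 1) * ENNReal.ofReal (g y) ∂μ := lintegral_mono hpow
      _ = ENNReal.ofReal M ^ (p - 1) * ∫⁻ y, ENNReal.ofReal (g y) ∂μ := lintegral_const_mul' _ _ hMp
      _ ≤ ENNReal.ofReal M ^ (p - 1) := mul_le_of_le_one_right' hint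
  rw [eLpNorm_eq_lintegral_rpow_enorm_toReal (by simpa using hp0) ENNReal.ofReal_ne_top,
    ENNReal.toReal_ofReal hp0.le]
  simp_rw [Real.enorm_eq_ofReal (hg _)]
  calc (∫⁻ y, ENNReal.ofReal (g y) ^ p ∂μ) ^ (1 / p)
      ≤ (ENNReal.ofReal M ^ (p - 1)) ^ (1 / p) := by gcongr
    _ = ENNReal.ofReal (M ^ ((p - 1) / p)) := by
        rw [← ENNReal.rpow_mul, mul_one_div, ENNReal.ofReal_rpow_of_nonneg hM (by positivity)]

theorem stmt6_general (ε : ℝ) (hε : 0 < ε) (N : ℕ) (x : ℝ → ℕ → ℝ)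
    (hcont : ∀ i ≤ N, ContinuousOn (fun t => x t i) (Set.Ici 0))
    (hinit : ∀ i < N, x 0 i ≤ x 0 (i + 1))
    (hord : ∀ t : ℝ, 0 < t → ∀ i < N, x t i < x t (i + 1))
    (hode : ∀ i ≤ N, ∀ t : ℝ, 0 < t →
      HasDerivAt (fun s => x s i) (particleRHS ε N (x t) i) t) :
    (∀ t : ℝ, 0 < t → ∀ i < N,
      x t (i + 1) - x t i ≥ (2 * ε / N) * (1 - Real.exp (-t / (2 * ε ^ 3)))) ∧
    (∀ p : ℝ, 1 ≤ p → ∀ t : ℝ, 0 < t →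
      eLpNorm (fun y => discDens N x y t) (ENNReal.ofReal p) volume ≤
        ENNReal.ofReal ((2 * ε) ^ (-((p - 1) / p)) *
          (1 - Real.exp (-t / (2 * ε ^ 3))) ^ (-((p - 1) / p)))) ∧
    (∀ t : ℝ, 0 < t →
      eLpNorm (fun y => discDens N x y t) ⊤ volume ≤
        ENNReal.ofReal ((2 * ε)⁻¹ * (1 - Real.exp (-t / (2 * ε ^ 3)))⁻¹)) := by
  have hgap : ∀ t : ℝ, 0 < t → ∀ i < N,
      2 * ε / N * (1 - exp (-t / (2 * ε ^ 3))) ≤ x t (i + 1) - x t i := fun t ht i hi =>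
    particle_gap_ge hε hcont hinit hord hode ht.le hi
  have hdecay : ∀ t : ℝ, 0 < t → 0 < 1 - exp (-t / (2 * ε ^ 3)) := fun t ht =>
    sub_pos.mpr (exp_lt_one_iff.mpr (div_neg_of_neg_of_pos (neg_neg_of_pos ht) (by positivity)))
  have hdens : ∀ t : ℝ, 0 < t → ∀ y,
      discDens N x y t ≤ (2 * ε)⁻¹ * (1 - exp (-t / (2 * ε ^ 3)))⁻¹ := fun t ht y => by
    rw [← mul_inv]
    exact discDens_le_of_div_le_gap (mul_pos (by positivity) (hdecay t ht))
      (fun k hk => (div_mul_eq_mul_div _ _ _).symm.trans_le (hgap t ht k hk)) y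
  have hnonneg : ∀ t : ℝ, 0 < t → ∀ y, 0 ≤ discDens N x y t := fun t ht =>
    discDens_nonneg fun k hk => (hord t ht k hk).le
  refine ⟨fun t ht i hi => hgap t ht i hi, fun p hp t ht => ?_, fun t ht => ?_⟩
  · have h2ε : 0 ≤ 2 * ε := by positivity
    have he := (hdecay t ht).le
    calc eLpNorm (fun y => discDens N x y t) (ENNReal.ofReal p) volume
        ≤ ENNReal.ofReal (((2 * ε)⁻¹ * (1 - exp (-t / (2 * ε ^ 3)))⁻¹) ^ ((p - 1) / p)) :=
          eLpNorm_le_rpow_of_le_of_lintegral_le_one (by positivity) (hnonneg t ht) (hdens t ht)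
            (lintegral_discDens_le_one fun k hk => (hord t ht k hk).le) hp
      _ = _ := by
          rw [mul_rpow (inv_nonneg.mpr h2ε) (inv_nonneg.mpr he), inv_rpow h2ε, inv_rpow he,
            ← rpow_neg h2ε, ← rpow_neg he]
  · rw [eLpNorm_exponent_top]
    refine eLpNormEssSup_le_of_ae_bound (Filter.Eventually.of_forall fun y => ?_)
    rw [Real.norm_eq_abs, abs_of_nonneg (hnonneg t ht y)]
    exact hdens t ht y

/-- smoothing effect for possibly initially overlapping particles.
If the particles are continuous on `[0,∞)`, merely ordered (possibly overlapping) at `t = 0`,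
strictly ordered for `t > 0`, and solve the particle ODE for `t > 0`, then
`d_i(t) ≥ (2ε/N)(1 - e^{-t/(2ε³)})` for `t > 0`, and consequently for every `p ∈ [1,∞]`,
`‖ρ^N(·,t)‖_{L^p} ≤ (2ε)^{-(p-1)/p} (1 - e^{-t/(2ε³)})^{-(p-1)/p}`
(with the convention `(p-1)/p = 1` for `p = ∞`). -/
theorem stmt6 (ε : ℝ) (hε : 0 < ε) (N : ℕ) (hN : 1 ≤ N) (x : ℝ → ℕ → ℝ)
    (hcont : ∀ i ≤ N, ContinuousOn (fun t => x t i) (Set.Ici 0))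
    (hinit : ∀ i < N, x 0 i ≤ x 0 (i + 1))
    (hord : ∀ t : ℝ, 0 < t → ∀ i < N, x t i < x t (i + 1))
    (hode : ∀ i ≤ N, ∀ t : ℝ, 0 < t →
      HasDerivAt (fun s => x s i) (particleRHS ε N (x t) i) t) :
    (∀ t : ℝ, 0 < t → ∀ i < N,
      x t (i + 1) - x t i ≥ (2 * ε / N) * (1 - Real.exp (-t / (2 * ε ^ 3)))) ∧
    (∀ p : ℝ, 1 ≤ p → ∀ t : ℝ, 0 < t →
      eLpNorm (fun y => discDens N x y t) (ENNReal.ofReal p) volume ≤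
        ENNReal.ofReal ((2 * ε) ^ (-((p - 1) / p)) *
          (1 - Real.exp (-t / (2 * ε ^ 3))) ^ (-((p - 1) / p)))) ∧
    (∀ t : ℝ, 0 < t →
      eLpNorm (fun y => discDens N x y t) ⊤ volume ≤
        ENNReal.ofReal ((2 * ε)⁻¹ * (1 - Real.exp (-t / (2 * ε ^ 3)))⁻¹)) :=
  stmt6_general ε hε N x hcont hinit hord hode
end

section
/- Let ε > 0, let N ≥ 1 be an integer, let x be a strictly ordered particle solution on [0,∞), and let φ : [0,∞) → ℝ be C¹ on (0,∞). Set ψ(r) = φ(r)/r, so ψ'(r) = (φ'(r)·r − φ(r))/r² for r > 0. Then the function t ↦ Σ_{i=0}^{N−1} φ(R_i(t))·d_i(t) = ∫_{x_0(t)}^{x_N(t)} φ(ρ^N(y,t)) dy is differentiable on [0,∞) and its derivative equals (1/ε²)·∫_ℝ ρ^N(y,t)²·ψ'(ρ^N(y,t))·( W_ε ∗ ρ^N(y,t) − ρ^N(y,t) ) dy. -/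
open MeasureTheory Real Set
open scoped ENNReal

/-! On the strip `[x_i, x_{i+1})` the density is the constant `R_i`, so the functional equals
`∑ φ(R_i) d_i` and its derivative is `∑ (φ(R_i) - φ'(R_i) R_i) ḋ_i`, with `ḋ_i = ẋ_{i+1} - ẋ_i`
given by the particle system. On the same strip the integrand on the right is
`(φ'(R_i) R_i - φ(R_i)) (W_ε ∗ ρ^N - R_i)`, so everything reduces to
`∫_{x_i}^{x_{i+1}} W_ε ∗ ρ^N = 1/N + ε² (ẋ_i - ẋ_{i+1})`.
That integral is a sum over strips `k` of `R_k ∫_{x_i}^{x_{i+1}} ∫_{x_k}^{x_{k+1}} W_ε(y - z)`, a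
second difference of the `C¹` second primitive `G(x) = |x|/2 + ε² W_ε(x)` of `W_ε`. Its `|x|/2`
part contributes only for `k = i`, giving `1/N`, and its `ε² W_ε` part is `ε²` times the
difference quotients of `W_ε` that define the particle velocities. -/

noncomputable def morsePrimitive (ε x : ℝ) : ℝ := 1 / 2 * Real.sign x * (1 - Real.exp (-|x| / ε))

noncomputable def morseSecondPrimitive (ε x : ℝ) : ℝ := |x| / 2 + ε ^ 2 * Morse ε x

theorem morse_sub_comm (ε a b : ℝ) : Morse ε (a - b) = Morse ε (b - a) := by
  simp only [Morse, abs_sub_comm]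

theorem hasDerivAt_of_eqOn_Iic_of_eqOn_Ici {f g h f' : ℝ → ℝ} {c : ℝ}
    (hh : ∀ y ≤ c, HasDerivAt h (f' y) y) (hg : ∀ y, c ≤ y → HasDerivAt g (f' y) y)
    (hfh : EqOn f h (Iic c)) (hfg : EqOn f g (Ici c)) (y : ℝ) : HasDerivAt f (f' y) y := by
  rcases lt_trichotomy y c with hy | rfl | hy
  · exact (hh y hy.le).congr_of_eventuallyEq
      (Filter.eventually_of_mem (Iio_mem_nhds hy) fun z hz => hfh (Iio_subset_Iic_self hz))
  · have := ((hh y le_rfl).hasDerivWithinAt.congr hfh (hfh self_mem_Iic)).union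
      ((hg y le_rfl).hasDerivWithinAt.congr hfg (hfg self_mem_Ici))
    rwa [Iic_union_Ici, hasDerivWithinAt_univ] at this
  · exact (hg y hy.le).congr_of_eventuallyEq
      (Filter.eventually_of_mem (Ioi_mem_nhds hy) fun z hz => hfg (Ioi_subset_Ici_self hz))

section Primitives

variable {ε : ℝ}

theorem morsePrimitive_of_nonneg {y : ℝ} (hy : 0 ≤ y) :
    morsePrimitive ε y = (1 - Real.exp (-y / ε)) / 2 := by
  rcases hy.eq_or_lt with rfl | hy
  · simp [morsePrimitive]
  · simp [morsePrimitive, Real.sign_of_pos hy, abs_of_pos hy]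
    ring

theorem morsePrimitive_of_nonpos {y : ℝ} (hy : y ≤ 0) :
    morsePrimitive ε y = (Real.exp (y / ε) - 1) / 2 := by
  rcases hy.eq_or_lt with rfl | hy
  · simp [morsePrimitive]
  · simp [morsePrimitive, Real.sign_of_neg hy, abs_of_neg hy]
    ring

theorem hasDerivAt_exp_mul_div (σ y : ℝ) :
    HasDerivAt (fun z => Real.exp (σ * z / ε)) (σ / ε * Real.exp (σ * y / ε)) y := by
  have := (((hasDerivAt_id y).const_mul σ).div_const ε).exp
  simpa [mul_comm, mul_div_assoc] using this

theorem hasDerivAt_morsePrimitive (hε : ε ≠ 0) (y : ℝ) :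
    HasDerivAt (morsePrimitive ε) (Morse ε y) y := by
  refine hasDerivAt_of_eqOn_Iic_of_eqOn_Ici (c := 0)
    (h := fun z => (Real.exp (1 * z / ε) - 1) / 2) (g := fun z => (1 - Real.exp (-1 * z / ε)) / 2)
    (fun z hz => ?_) (fun z hz => ?_) (fun z hz => ?_) (fun z hz => ?_) y
  · refine ((hasDerivAt_exp_mul_div 1 z).sub_const 1 |>.div_const 2).congr_deriv ?_
    rw [Morse, abs_of_nonpos hz]
    field_simp
  · refine ((hasDerivAt_exp_mul_div (-1) z).const_sub 1 |>.div_const 2).congr_deriv ?_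
    rw [Morse, abs_of_nonneg hz]
    field_simp
  · simp [morsePrimitive_of_nonpos hz]
  · simp [morsePrimitive_of_nonneg hz]

theorem hasDerivAt_morseSecondPrimitive (hε : ε ≠ 0) (y : ℝ) :
    HasDerivAt (morseSecondPrimitive ε) (morsePrimitive ε y) y := by
  refine hasDerivAt_of_eqOn_Iic_of_eqOn_Ici (c := 0)
    (h := fun z => -z / 2 + ε / 2 * Real.exp (1 * z / ε))
    (g := fun z => z / 2 + ε / 2 * Real.exp (-1 * z / ε))
    (fun z hz => ?_) (fun z hz => ?_) (fun z hz => ?_) (fun z hz => ?_) y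
  · refine (((hasDerivAt_id z).neg.div_const 2).add
      ((hasDerivAt_exp_mul_div 1 z).const_mul (ε / 2))).congr_deriv ?_
    rw [morsePrimitive_of_nonpos hz]
    field_simp
    ring
  · refine (((hasDerivAt_id z).div_const 2).add
      ((hasDerivAt_exp_mul_div (-1) z).const_mul (ε / 2))).congr_deriv ?_
    rw [morsePrimitive_of_nonneg hz]
    field_simp
    ring
  · simp only [morseSecondPrimitive, Morse, abs_of_nonpos (mem_Iic.1 hz)]
    field_simp
  · simp only [morseSecondPrimitive, Morse, abs_of_nonneg (mem_Ici.1 hz)]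
    field_simp

theorem continuous_morsePrimitive (hε : ε ≠ 0) : Continuous (morsePrimitive ε) :=
  continuous_iff_continuousAt.2 fun y => (hasDerivAt_morsePrimitive hε y).continuousAt

theorem integral_morse_sub (hε : ε ≠ 0) (y c d : ℝ) :
    ∫ z in c..d, Morse ε (y - z) = morsePrimitive ε (y - c) - morsePrimitive ε (y - d) := by
  rw [intervalIntegral.integral_comp_sub_left (Morse ε) y,
    intervalIntegral.integral_eq_sub_of_hasDerivAt (fun u _ => hasDerivAt_morsePrimitive hε u)
      ((continuous_morse ε).intervalIntegrable _ _)]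

theorem integral_morsePrimitive_sub (hε : ε ≠ 0) (a b c : ℝ) :
    ∫ y in a..b, morsePrimitive ε (y - c) =
      morseSecondPrimitive ε (b - c) - morseSecondPrimitive ε (a - c) := by
  rw [intervalIntegral.integral_comp_sub_right (morsePrimitive ε) c,
    intervalIntegral.integral_eq_sub_of_hasDerivAt
      (fun u _ => hasDerivAt_morseSecondPrimitive hε u)
      ((continuous_morsePrimitive hε).intervalIntegrable _ _)]

end Primitives

-- The left-hand side is twice the length of `[a, b] ∩ [c, d]`.
theorem abs_secondDifference_eq_zero_of_disjoint {a b c d : ℝ} (hab : a ≤ b) (hcd : c ≤ d)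
    (h : b ≤ c ∨ d ≤ a) :
    |b - c| - |a - c| - (|b - d| - |a - d|) = 0 := by
  rcases h with h | h
  · rw [abs_of_nonpos (by linarith : b - c ≤ 0), abs_of_nonpos (by linarith : a - c ≤ 0),
      abs_of_nonpos (by linarith : b - d ≤ 0), abs_of_nonpos (by linarith : a - d ≤ 0)]
    ring
  · rw [abs_of_nonneg (by linarith : 0 ≤ b - c), abs_of_nonneg (by linarith : 0 ≤ a - c),
      abs_of_nonneg (by linarith : 0 ≤ b - d), abs_of_nonneg (by linarith : 0 ≤ a - d)]
    ring

theorem morseSecondPrimitive_secondDifference (ε a b c d : ℝ) :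
    morseSecondPrimitive ε (b - c) - morseSecondPrimitive ε (a - c) -
        (morseSecondPrimitive ε (b - d) - morseSecondPrimitive ε (a - d)) =
      (|b - c| - |a - c| - (|b - d| - |a - d|)) / 2 +
        ε ^ 2 * (Morse ε (d - a) - Morse ε (c - a) - (Morse ε (d - b) - Morse ε (c - b))) := by
  rw [morseSecondPrimitive, morseSecondPrimitive, morseSecondPrimitive, morseSecondPrimitive,
    morse_sub_comm ε b c, morse_sub_comm ε a c, morse_sub_comm ε b d, morse_sub_comm ε a d]
  ring

section Strips

variable {N : ℕ} {a : ℕ → ℝ}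

theorem apply_add_one_le_or_apply_add_one_le (ha : ∀ i < N, a i < a (i + 1)) {i k : ℕ}
    (hi : i < N) (hk : k < N) (hik : i ≠ k) : a (i + 1) ≤ a k ∨ a (k + 1) ≤ a i := by
  have hmono := (strictMonoOn_Iic_of_lt_succ (n := N) (ψ := a) fun m hm => ha m hm).monotoneOn
  rcases hik.lt_or_gt with h | h
  · exact .inl (hmono (mem_Iic.2 hi) (mem_Iic.2 hk.le) h)
  · exact .inr (hmono (mem_Iic.2 hk) (mem_Iic.2 hi.le) h)

theorem sum_indicator_Ico_of_mem (ha : ∀ i < N, a i < a (i + 1)) {M : Type*} [AddCommMonoid M]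
    (f : ℕ → ℝ → M) {i : ℕ} (hi : i < N) {y : ℝ} (hy : y ∈ Ico (a i) (a (i + 1))) :
    ∑ k ∈ Finset.range N, (Ico (a k) (a (k + 1))).indicator (f k) y = f i y := by
  rw [Finset.sum_eq_single_of_mem i (Finset.mem_range.2 hi), indicator_of_mem hy]
  intro k hk hki
  refine indicator_of_notMem (fun hyk => ?_) _
  rcases apply_add_one_le_or_apply_add_one_le ha hi (Finset.mem_range.1 hk) hki.symm with h | h
  · exact (hy.2.trans_le h).not_ge hyk.1
  · exact (hyk.2.trans_le h).not_ge hy.1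

theorem integral_sum_indicator_Ico (ha : ∀ k < N, a k ≤ a (k + 1)) (g : ℕ → ℝ → ℝ)
    (hg : ∀ k, Continuous (g k)) :
    ∫ y, ∑ k ∈ Finset.range N, (Ico (a k) (a (k + 1))).indicator (g k) y =
      ∑ k ∈ Finset.range N, ∫ y in a k..a (k + 1), g k y := by
  rw [integral_finsetSum _ fun k _ =>
    ((hg k).integrableOn_Icc.mono_set Ico_subset_Icc_self).integrable_indicator measurableSet_Ico]
  refine Finset.sum_congr rfl fun k hk => ?_
  rw [integral_indicator measurableSet_Ico, integral_Ico_eq_integral_Ioo,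
    ← integral_Ioc_eq_integral_Ioo, intervalIntegral.integral_of_le (ha k (Finset.mem_range.1 hk))]

end Strips

section DiscreteDensity

variable {ε : ℝ} {N : ℕ} {x : ℝ → ℕ → ℝ} {t : ℝ}

theorem discDens_of_mem (hx : ∀ i < N, x t i < x t (i + 1)) {i : ℕ} (hi : i < N) {y : ℝ}
    (hy : y ∈ Ico (x t i) (x t (i + 1))) :
    discDens N x y t = 1 / ((N : ℝ) * (x t (i + 1) - x t i)) :=
  sum_indicator_Ico_of_mem hx (fun k _ => 1 / ((N : ℝ) * (x t (k + 1) - x t k))) hi hy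

theorem apply_discDens_eq_sum_indicator (hx : ∀ i < N, x t i < x t (i + 1))
    (Φ : ℝ → ℝ → ℝ) (hΦ : ∀ y, Φ 0 y = 0) (y : ℝ) :
    Φ (discDens N x y t) y = ∑ k ∈ Finset.range N,
      (Ico (x t k) (x t (k + 1))).indicator (Φ (1 / ((N : ℝ) * (x t (k + 1) - x t k)))) y := by
  by_cases h : ∃ i < N, y ∈ Ico (x t i) (x t (i + 1))
  · obtain ⟨i, hi, hy⟩ := h
    rw [discDens_of_mem hx hi hy, sum_indicator_Ico_of_mem hx _ hi hy]
  · push Not at h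
    have hout : ∀ k ∈ Finset.range N, y ∉ Ico (x t k) (x t (k + 1)) :=
      fun k hk => h k (Finset.mem_range.1 hk)
    rw [discDens, Finset.sum_eq_zero fun k hk => indicator_of_notMem (hout k hk) _,
      Finset.sum_eq_zero fun k hk => indicator_of_notMem (hout k hk) _, hΦ]

theorem sum_mul_eq_integral_discDens (hx : ∀ i < N, x t i < x t (i + 1)) (φ : ℝ → ℝ) :
    ∑ i ∈ Finset.range N, φ (1 / ((N : ℝ) * (x t (i + 1) - x t i))) * (x t (i + 1) - x t i) =
      ∫ y in x t 0..x t N, φ (discDens N x y t) := by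
  have hconst : ∀ i < N, EqOn (fun y => φ (discDens N x y t))
      (fun _ => φ (1 / ((N : ℝ) * (x t (i + 1) - x t i)))) (uIoo (x t i) (x t (i + 1))) := by
    intro i hi y hy
    rw [uIoo_of_le (hx i hi).le] at hy
    simp only [discDens_of_mem hx hi (Ioo_subset_Ico_self hy)]
  rw [← intervalIntegral.sum_integral_adjacent_intervals fun i hi =>
    intervalIntegrable_const.congr_uIoo (hconst i hi).symm]
  refine Finset.sum_congr rfl fun i hi => ?_
  rw [intervalIntegral.integral_congr_uIoo (hconst i (Finset.mem_range.1 hi)),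
    intervalIntegral.integral_const, smul_eq_mul, mul_comm]

theorem conv_morse_discDens (hε : ε ≠ 0) (hx : ∀ i < N, x t i < x t (i + 1)) (y : ℝ) :
    conv (Morse ε) (fun z => discDens N x z t) y = ∑ k ∈ Finset.range N,
      1 / ((N : ℝ) * (x t (k + 1) - x t k)) *
        (morsePrimitive ε (y - x t k) - morsePrimitive ε (y - x t (k + 1))) := by
  have hsplit : (fun z => Morse ε (y - z) * discDens N x z t) = fun z => ∑ k ∈ Finset.range N,
      (Ico (x t k) (x t (k + 1))).indicator
        (fun z => Morse ε (y - z) * (1 / ((N : ℝ) * (x t (k + 1) - x t k)))) z := by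
    funext z
    simp only [discDens, Finset.mul_sum, indicator_mul_right]
  rw [conv, hsplit, integral_sum_indicator_Ico (fun k hk => (hx k hk).le)
    (fun k z => Morse ε (y - z) * (1 / ((N : ℝ) * (x t (k + 1) - x t k)))) fun k =>
      ((continuous_morse ε).comp (continuous_sub_left y)).mul continuous_const]
  refine Finset.sum_congr rfl fun k _ => ?_
  rw [intervalIntegral.integral_mul_const, integral_morse_sub hε, mul_comm]

theorem continuous_conv_morse_discDens (hε : ε ≠ 0) (hx : ∀ i < N, x t i < x t (i + 1)) :
    Continuous (conv (Morse ε) (fun z => discDens N x z t)) := by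
  have hF := continuous_morsePrimitive hε
  rw [funext (conv_morse_discDens hε hx)]
  exact continuous_finsetSum _ fun k _ => continuous_const.mul
    ((hF.comp (continuous_sub_right _)).sub (hF.comp (continuous_sub_right _)))

theorem integral_conv_morse_discDens_strip (hε : ε ≠ 0) (hx : ∀ i < N, x t i < x t (i + 1))
    {i : ℕ} (hi : i < N) :
    ∫ y in x t i..x t (i + 1), conv (Morse ε) (fun z => discDens N x z t) y =
      1 / N + ε ^ 2 * (particleRHS ε N (x t) i - particleRHS ε N (x t) (i + 1)) := by
  have hF : ∀ c, Continuous fun y => morsePrimitive ε (y - c) :=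
    fun c => (continuous_morsePrimitive hε).comp (continuous_sub_right c)
  have hN : (N : ℝ) ≠ 0 := Nat.cast_ne_zero.2 (Nat.ne_zero_of_lt hi)
  have hterm : ∀ k ∈ Finset.range N, ∫ y in x t i..x t (i + 1),
      1 / ((N : ℝ) * (x t (k + 1) - x t k)) *
        (morsePrimitive ε (y - x t k) - morsePrimitive ε (y - x t (k + 1))) =
      (if k = i then 1 / (N : ℝ) else 0) + ε ^ 2 * (1 / N *
        ((Morse ε (x t (k + 1) - x t i) - Morse ε (x t k - x t i)) / (x t (k + 1) - x t k) -
          (Morse ε (x t (k + 1) - x t (i + 1)) - Morse ε (x t k - x t (i + 1))) /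
            (x t (k + 1) - x t k))) := by
    intro k hk
    replace hk := Finset.mem_range.1 hk
    have hd : x t (k + 1) - x t k ≠ 0 := (sub_pos.2 (hx k hk)).ne'
    rw [intervalIntegral.integral_const_mul, intervalIntegral.integral_sub
      ((hF _).intervalIntegrable _ _) ((hF _).intervalIntegrable _ _),
      integral_morsePrimitive_sub hε, integral_morsePrimitive_sub hε,
      morseSecondPrimitive_secondDifference]
    rcases eq_or_ne k i with rfl | hki
    · rw [if_pos rfl, sub_self, sub_self, abs_zero, abs_sub_comm (x t k),
        abs_of_pos (sub_pos.2 (hx k hk))]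
      field_simp
      ring
    · rw [if_neg hki, abs_secondDifference_eq_zero_of_disjoint (hx i hi).le (hx k hk).le
        (apply_add_one_le_or_apply_add_one_le hx hi hk hki.symm)]
      field_simp
      ring
  simp_rw [conv_morse_discDens hε hx]
  have hcont : ∀ k, Continuous fun y => 1 / ((N : ℝ) * (x t (k + 1) - x t k)) *
      (morsePrimitive ε (y - x t k) - morsePrimitive ε (y - x t (k + 1))) :=
    fun k => continuous_const.mul ((hF _).sub (hF _))
  rw [intervalIntegral.integral_finsetSum fun k _ => (hcont k).intervalIntegrable _ _,
    Finset.sum_congr rfl hterm, Finset.sum_add_distrib, Finset.sum_ite_eq',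
    if_pos (Finset.mem_range.2 hi), particleRHS, particleRHS, ← mul_sub, ← Finset.sum_sub_distrib,
    Finset.mul_sum, Finset.mul_sum]

theorem integral_mul_conv_morse_sub_discDens (hε : ε ≠ 0) (hx : ∀ i < N, x t i < x t (i + 1))
    (g : ℝ → ℝ) (hg : g 0 = 0) :
    ∫ y, g (discDens N x y t) *
        (conv (Morse ε) (fun z => discDens N x z t) y - discDens N x y t) =
      ε ^ 2 * ∑ i ∈ Finset.range N, g (1 / ((N : ℝ) * (x t (i + 1) - x t i))) *
        (particleRHS ε N (x t) i - particleRHS ε N (x t) (i + 1)) := by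
  have hconv := continuous_conv_morse_discDens hε hx
  refine (integral_congr_ae (ae_of_all _ fun y => apply_discDens_eq_sum_indicator hx
    (fun r y => g r * (conv (Morse ε) (fun z => discDens N x z t) y - r)) (by simp [hg]) y)).trans
      ?_
  rw [integral_sum_indicator_Ico (fun k hk => (hx k hk).le) _ fun k => ?_, Finset.mul_sum]
  swap
  · exact continuous_const.mul (hconv.sub continuous_const)
  refine Finset.sum_congr rfl fun i hi => ?_
  have hd : x t (i + 1) - x t i ≠ 0 := (sub_pos.2 (hx i (Finset.mem_range.1 hi))).ne'
  have hN : (N : ℝ) ≠ 0 := Nat.cast_ne_zero.2 (Nat.ne_zero_of_lt (Finset.mem_range.1 hi))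
  rw [intervalIntegral.integral_const_mul, intervalIntegral.integral_sub
    (hconv.intervalIntegrable _ _) intervalIntegrable_const,
    integral_conv_morse_discDens_strip hε hx (Finset.mem_range.1 hi),
    intervalIntegral.integral_const, smul_eq_mul]
  field_simp
  ring

end DiscreteDensity

theorem HasDerivWithinAt.perspective {φ d : ℝ → ℝ} {φ' d' c t : ℝ} {s : Set ℝ}
    (hd : HasDerivWithinAt d d' s t) (hcd : c * d t ≠ 0)
    (hφ : HasDerivAt φ φ' (1 / (c * d t))) :
    HasDerivWithinAt (fun u => φ (1 / (c * d u)) * d u)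
      ((φ (1 / (c * d t)) - φ' * (1 / (c * d t))) * d') s t := by
  simp only [one_div] at hφ ⊢
  refine ((hφ.comp_hasDerivWithinAt t ((hd.const_mul c).inv hcd)).mul hd).congr_deriv ?_
  simp only [Function.comp_apply, Pi.inv_apply]
  field_simp
  ring

theorem stmt7_general (ε : ℝ) (hε : 0 < ε) (N : ℕ) (x : ℝ → ℕ → ℝ)
    (hx : IsParticleSol ε N x) (φ φ' : ℝ → ℝ)
    (hφ : ∀ r : ℝ, 0 < r → HasDerivAt φ (φ' r) r) :
    ∀ t : ℝ, 0 ≤ t →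
      ((∑ i ∈ Finset.range N,
          φ (1 / ((N : ℝ) * (x t (i + 1) - x t i))) * (x t (i + 1) - x t i)) =
        ∫ y in (x t 0)..(x t N), φ (discDens N x y t)) ∧
      HasDerivWithinAt
        (fun s => ∑ i ∈ Finset.range N,
          φ (1 / ((N : ℝ) * (x s (i + 1) - x s i))) * (x s (i + 1) - x s i))
        ((1 / ε ^ 2) * ∫ y,
          (discDens N x y t) ^ 2 *
            ((φ' (discDens N x y t) * discDens N x y t - φ (discDens N x y t)) /
              (discDens N x y t) ^ 2) *
            (conv (Morse ε) (fun z => discDens N x z t) y - discDens N x y t))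
        (Set.Ici 0) t := by
  intro t ht
  have hmono := hx.1 t ht
  refine ⟨sum_mul_eq_integral_discDens hmono φ, ?_⟩
  have hR : ∀ i < N, 0 < 1 / ((N : ℝ) * (x t (i + 1) - x t i)) := fun i hi =>
    one_div_pos.2 (mul_pos (Nat.cast_pos.2 (Nat.zero_lt_of_lt hi)) (sub_pos.2 (hmono i hi)))
  refine (HasDerivWithinAt.fun_sum fun i hi => HasDerivWithinAt.perspective
    (d := fun s => x s (i + 1) - x s i)
    ((hx.2 (i + 1) (Finset.mem_range.1 hi) t ht).sub (hx.2 i (Finset.mem_range.1 hi).le t ht))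
    (one_div_pos.1 (hR i (Finset.mem_range.1 hi))).ne'
    (hφ _ (hR i (Finset.mem_range.1 hi)))).congr_deriv ?_
  rw [integral_mul_conv_morse_sub_discDens hε.ne' hmono
    (fun r => r ^ 2 * ((φ' r * r - φ r) / r ^ 2)) (by simp), ← mul_assoc,
    one_div_mul_cancel (pow_ne_zero 2 hε.ne'), one_mul]
  refine Finset.sum_congr rfl fun i hi => ?_
  have hRi := hR i (Finset.mem_range.1 hi)
  generalize 1 / ((N : ℝ) * (x t (i + 1) - x t i)) = R at hRi ⊢
  field_simp
  ring

/-- main uniform estimate. For `φ` of class `C¹` on `(0,∞)` and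
`ψ(r) = φ(r)/r`, the functional `t ↦ ∑_{i<N} φ(R_i(t)) d_i(t) = ∫_{x_0(t)}^{x_N(t)} φ(ρ^N(y,t)) dy`
is differentiable with derivative
`(1/ε²) ∫ ρ^N(y,t)² ψ'(ρ^N(y,t)) (W_ε ∗ ρ^N(y,t) - ρ^N(y,t)) dy`,
where `ψ'(r) = (φ'(r) r - φ(r))/r²`. -/
theorem stmt7 (ε : ℝ) (hε : 0 < ε) (N : ℕ) (hN : 1 ≤ N) (x : ℝ → ℕ → ℝ)
    (hx : IsParticleSol ε N x) (φ φ' : ℝ → ℝ)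
    (hφ : ∀ r : ℝ, 0 < r → HasDerivAt φ (φ' r) r)
    (hφ' : ContinuousOn φ' (Set.Ioi 0)) :
    ∀ t : ℝ, 0 ≤ t →
      ((∑ i ∈ Finset.range N,
          φ (1 / ((N : ℝ) * (x t (i + 1) - x t i))) * (x t (i + 1) - x t i)) =
        ∫ y in (x t 0)..(x t N), φ (discDens N x y t)) ∧
      HasDerivWithinAt
        (fun s => ∑ i ∈ Finset.range N,
          φ (1 / ((N : ℝ) * (x s (i + 1) - x s i))) * (x s (i + 1) - x s i))
        ((1 / ε ^ 2) * ∫ y,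
          (discDens N x y t) ^ 2 *
            ((φ' (discDens N x y t) * discDens N x y t - φ (discDens N x y t)) /
              (discDens N x y t) ^ 2) *
            (conv (Morse ε) (fun z => discDens N x z t) y - discDens N x y t))
        (Set.Ici 0) t :=
  stmt7_general ε hε N x hx φ φ' hφ
end
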